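/- arXiv:1007.1484 — 2 statements merged into one kernel-verified Lean document; each statement's English description precedes it below -/
import Mathlib

section
/- Let G be a finite directed flow network with nonnegative real edge capacities and let P, Q, R, S be four pairwise disjoint sets of terminal vertices. Then (P ↛ Q∪R∪S) + (P∪Q∪R ↛ S) ≤ (P∪Q ↛ R∪S) + (P∪R ↛ Q∪S). -/
/-!
Minimum cuts are submodular. Take optimal cuts `A` for `(P ∪ Q ↛ R ∪ S)` and `B` for
`(P ∪ R ↛ Q ∪ S)`. Then `A ∩ B` separates `P` from `Q ∪ R ∪ S` and `A ∪ B` separates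
`P ∪ Q ∪ R` from `S`, while the capacity of cuts is submodular,
`cap (A ∩ B) + cap (A ∪ B) ≤ cap A + cap B`, as one checks edge by edge using `c ≥ 0`.
-/

open Finset

/-- Capacity of the cut determined by vertex set `A`: total capacity of edges leaving `A`. -/
def cutCap {V : Type} [Fintype V] [DecidableEq V] (c : V → V → ℝ) (A : Finset V) : ℝ :=
  ∑ u ∈ A, ∑ v ∈ Aᶜ, c u v

/-- Minimum capacity of a cut with all of `S` on the source side and all of `T` on the sink side. -/
noncomputable def minCut {V : Type} [Fintype V] [DecidableEq V] (c : V → V → ℝ) (S T : Finset V) : ℝ :=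
  sInf {x : ℝ | ∃ A : Finset V, S ⊆ A ∧ Disjoint T A ∧ x = cutCap c A}

/-- Net outflow of `f` at vertex `v`. -/
def netOut {V : Type} [Fintype V] (f : V → V → ℝ) (v : V) : ℝ :=
  (∑ w, f v w) - ∑ w, f w v

/-- `f` is an external flow in the network with capacities `c`, terminals `q` and
terminal net-outflow values `x`. -/
def IsExtFlow {V : Type} [Fintype V] {k : ℕ} (c f : V → V → ℝ) (q : Fin k → V)
    (x : Fin k → ℝ) : Prop :=
  (∀ u v, 0 ≤ f u v ∧ f u v ≤ c u v) ∧
  (∀ v, (∀ i, q i ≠ v) → netOut f v = 0) ∧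
  (∀ i, netOut f (q i) = x i)

section Cuts

variable {V : Type} [Fintype V] [DecidableEq V] (c : V → V → ℝ)

lemma cutCap_eq_sum_ite (A : Finset V) :
    cutCap c A = ∑ u, ∑ v, if u ∈ A ∧ v ∉ A then c u v else 0 := by
  simp only [cutCap, ite_and, ← mem_compl, sum_ite_irrel, sum_ite_mem, univ_inter, sum_const_zero]

lemma cutCap_inter_add_cutCap_union_le (hc : ∀ u v, 0 ≤ c u v) (A B : Finset V) :
    cutCap c (A ∩ B) + cutCap c (A ∪ B) ≤ cutCap c A + cutCap c B := by
  simp only [cutCap_eq_sum_ite, ← sum_add_distrib]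
  refine sum_le_sum fun u _ => sum_le_sum fun v _ => ?_
  have := hc u v
  by_cases hA : u ∈ A <;> by_cases hB : u ∈ B <;> by_cases hA' : v ∈ A <;> by_cases hB' : v ∈ B <;>
    simp [hA, hB, hA', hB'] <;> linarith

lemma finite_cutCaps (S T : Finset V) :
    {x : ℝ | ∃ A : Finset V, S ⊆ A ∧ Disjoint T A ∧ x = cutCap c A}.Finite :=
  (Set.finite_range (cutCap c)).subset fun _ ⟨A, _, _, hx⟩ => ⟨A, hx.symm⟩

lemma minCut_le_cutCap {S T A : Finset V} (hS : S ⊆ A) (hT : Disjoint T A) :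
    minCut c S T ≤ cutCap c A :=
  csInf_le (finite_cutCaps c S T).bddBelow ⟨A, hS, hT, rfl⟩

lemma exists_minCut_eq_cutCap {S T : Finset V} (h : Disjoint T S) :
    ∃ A : Finset V, S ⊆ A ∧ Disjoint T A ∧ minCut c S T = cutCap c A := by
  refine Set.Nonempty.csInf_mem ?_ (finite_cutCaps c S T)
  exact ⟨cutCap c S, S, subset_rfl, h, rfl⟩

theorem minCut_inter_add_minCut_union_le (hc : ∀ u v, 0 ≤ c u v) {S₁ T₁ S₂ T₂ : Finset V}
    (h₁ : Disjoint T₁ S₁) (h₂ : Disjoint T₂ S₂) :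
    minCut c (S₁ ∩ S₂) (T₁ ∪ T₂) + minCut c (S₁ ∪ S₂) (T₁ ∩ T₂) ≤
      minCut c S₁ T₁ + minCut c S₂ T₂ := by
  obtain ⟨A, hSA, hTA, hA⟩ := exists_minCut_eq_cutCap c h₁
  obtain ⟨B, hSB, hTB, hB⟩ := exists_minCut_eq_cutCap c h₂
  have hinter : minCut c (S₁ ∩ S₂) (T₁ ∪ T₂) ≤ cutCap c (A ∩ B) :=
    minCut_le_cutCap c (inter_subset_inter hSA hSB) <| disjoint_union_left.2
      ⟨hTA.mono_right inter_subset_left, hTB.mono_right inter_subset_right⟩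
  have hunion : minCut c (S₁ ∪ S₂) (T₁ ∩ T₂) ≤ cutCap c (A ∪ B) :=
    minCut_le_cutCap c (union_subset_union hSA hSB) <| disjoint_union_right.2
      ⟨hTA.mono_left inter_subset_left, hTB.mono_left inter_subset_right⟩
  rw [hA, hB]
  linarith [cutCap_inter_add_cutCap_union_le c hc A B]

end Cuts

theorem stmt1 {V : Type} [Fintype V] [DecidableEq V] (c : V → V → ℝ)
    (hc : ∀ u v, 0 ≤ c u v) (P Q R S : Finset V)
    (hPQ : Disjoint P Q) (hPR : Disjoint P R) (hPS : Disjoint P S)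
    (hQR : Disjoint Q R) (hQS : Disjoint Q S) (hRS : Disjoint R S) :
    minCut c P (Q ∪ R ∪ S) + minCut c (P ∪ Q ∪ R) S ≤
      minCut c (P ∪ Q) (R ∪ S) + minCut c (P ∪ R) (Q ∪ S) := by
  have hsources : (P ∪ Q) ∩ (P ∪ R) = P := by
    rw [← union_inter_distrib_left, disjoint_iff_inter_eq_empty.1 hQR, union_empty]
  have hsinks : (R ∪ S) ∩ (Q ∪ S) = S := by
    rw [union_comm R, union_comm Q, ← union_inter_distrib_left,
      disjoint_iff_inter_eq_empty.1 hQR.symm, union_empty]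
  have h := minCut_inter_add_minCut_union_le c hc (S₁ := P ∪ Q) (T₁ := R ∪ S)
    (S₂ := P ∪ R) (T₂ := Q ∪ S) (by simp [*, disjoint_comm]) (by simp [*, disjoint_comm])
  rwa [hsources, hsinks, show R ∪ S ∪ (Q ∪ S) = Q ∪ R ∪ S by ac_rfl,
    show P ∪ Q ∪ (P ∪ R) = P ∪ Q ∪ R by ac_rfl] at h
end

section
/- A single-source external flow (x_1, …, x_k), where x_i ≤ 0 for all i ≥ 2, is realizable in a finite directed flow network G with terminals q_1, …, q_k if and only if (1) the sum of all x_i is 0, and (2) for every nonempty subset S of {q_2, …, q_k}, the sum of −x_i over q_i ∈ S is at most (q_1 ↛ S), the minimum capacity of a cut separating q_1 from S. -/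
open Finset

/-!
Attach a super-sink to the network, joined from every vertex `v ≠ q 0` by an edge whose capacity
is the demand `-b v` of `v`, where `b = Function.extend q x 0` spreads the terminal values over
all vertices. The cut conditions say precisely that every cut separating `q 0` from the
super-sink has capacity at least the total demand, so by max-flow min-cut a maximum flow
saturates every edge into the super-sink; its restriction to the original network realises `x`.
Max-flow min-cut is proved for real capacities directly: a maximum flow exists by compactness,
and the vertices reachable from the source in its residual network form a cut of capacity equal
to its value.
-/

lemma exists_pos_le_one_add_mul_sub_le {a b c : ℝ} (h : a < c) :
    ∃ t : ℝ, 0 < t ∧ t ≤ 1 ∧ a + t * (b - a) ≤ c := by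
  by_cases hb : b ≤ c
  · exact ⟨1, one_pos, le_rfl, by linarith⟩
  · have hab : 0 < b - a := by linarith
    refine ⟨(c - a) / (b - a), div_pos (by linarith) hab,
      (div_le_one hab).2 (by linarith), ?_⟩
    rw [div_mul_cancel₀ _ hab.ne']
    linarith

def unitFlow {V : Type} [DecidableEq V] (u v : V) : V → V → ℝ :=
  Pi.single u (Pi.single v 1)

lemma unitFlow_apply {V : Type} [DecidableEq V] (u v a b : V) :
    unitFlow u v a b = if a = u ∧ b = v then 1 else 0 := by
  by_cases hau : a = u
  · subst hau; simp [unitFlow, Pi.single_apply]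
  · simp [unitFlow, hau]

section Flows

variable {V : Type}

def Feasible (c f : V → V → ℝ) : Prop :=
  ∀ u v, 0 ≤ f u v ∧ f u v ≤ c u v

lemma feasible_iff_mem_Icc {c f : V → V → ℝ} : Feasible c f ↔ f ∈ Set.Icc 0 c := by
  simp only [Feasible, Set.mem_Icc, Pi.le_def, Pi.zero_apply, ← forall_and]

variable [Fintype V]

lemma netOut_add (f g : V → V → ℝ) : netOut (f + g) = netOut f + netOut g := by
  funext v
  simp only [netOut, Pi.add_apply, sum_add_distrib]
  ring

lemma netOut_sub (f g : V → V → ℝ) : netOut (f - g) = netOut f - netOut g := by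
  funext v
  simp only [netOut, Pi.sub_apply, sum_sub_distrib]
  ring

lemma netOut_smul (t : ℝ) (f : V → V → ℝ) : netOut (t • f) = t • netOut f := by
  funext v
  simp only [netOut, Pi.smul_apply, smul_eq_mul, ← mul_sum]
  ring

lemma continuous_netOut (v : V) : Continuous fun f : V → V → ℝ => netOut f v := by
  unfold netOut
  fun_prop

lemma sum_netOut_univ (f : V → V → ℝ) : ∑ v, netOut f v = 0 := by
  simp only [netOut, sum_sub_distrib]
  rw [sum_comm, sub_self]

def IsFlow (c : V → V → ℝ) (s t : V) (f : V → V → ℝ) : Prop :=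
  Feasible c f ∧ ∀ w, w ≠ s → w ≠ t → netOut f w = 0

lemma IsFlow.netOut_source {c f : V → V → ℝ} {s t : V} (hf : IsFlow c s t f) (hst : s ≠ t) :
    netOut f s = -netOut f t := by
  have h := sum_netOut_univ f
  rw [sum_eq_add_of_mem s t (mem_univ s) (mem_univ t) hst
    fun w _ hw => hf.2 w hw.1 hw.2] at h
  linarith

lemma exists_isMaxOn_netOut {c : V → V → ℝ} (hc : ∀ u v, 0 ≤ c u v) (s t : V) :
    ∃ f, IsFlow c s t f ∧ IsMaxOn (fun g => netOut g s) {g | IsFlow c s t g} f := by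
  have hflows : {g | IsFlow c s t g} =
      Set.Icc 0 c ∩ ⋂ w ∈ {w | w ≠ s ∧ w ≠ t}, {g | netOut g w = 0} := by
    ext g
    simp [IsFlow, feasible_iff_mem_Icc]
  have hcompact : IsCompact {g | IsFlow c s t g} := by
    rw [hflows]
    exact isCompact_Icc.inter_right <|
      isClosed_biInter fun w _ => isClosed_eq (continuous_netOut w) continuous_const
  have hzero : IsFlow c s t 0 :=
    ⟨fun u v => ⟨le_rfl, hc u v⟩, fun w _ _ => by simp [netOut]⟩
  exact hcompact.exists_isMaxOn ⟨0, hzero⟩ (continuous_netOut s).continuousOn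

variable [DecidableEq V]

lemma netOut_unitFlow (u v : V) : netOut (unitFlow u v) = Pi.single u 1 - Pi.single v 1 := by
  funext w
  have hout : ∑ b, unitFlow u v w b = (Pi.single u 1 : V → ℝ) w := by
    by_cases h : w = u
    · subst h; simp [unitFlow]
    · simp [unitFlow, h]
  have hin : ∑ a, unitFlow u v a w = (Pi.single v 1 : V → ℝ) w := by
    rw [Fintype.sum_eq_single u fun a ha => by simp [unitFlow, ha]]
    simp [unitFlow]
  simp only [netOut, hout, hin, Pi.sub_apply]

lemma sum_netOut_eq_sum_sum_compl (f : V → V → ℝ) (A : Finset V) :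
    ∑ v ∈ A, netOut f v = ∑ u ∈ A, ∑ v ∈ Aᶜ, (f u v - f v u) := by
  simp only [netOut, sum_sub_distrib, ← sum_add_sum_compl A, sum_add_distrib]
  rw [sum_comm (s := A) (t := A) (f := fun v w => f w v)]
  ring

lemma Feasible.sum_netOut_le_cutCap {c f : V → V → ℝ} (hf : Feasible c f) (A : Finset V) :
    ∑ v ∈ A, netOut f v ≤ cutCap c A := by
  rw [sum_netOut_eq_sum_sum_compl]
  exact sum_le_sum fun u _ => sum_le_sum fun v _ => by linarith [hf u v, hf v u]

lemma sum_netOut_eq_cutCap {c f : V → V → ℝ} {A : Finset V}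
    (hsat : ∀ u ∈ A, ∀ v ∉ A, f u v = c u v ∧ f v u = 0) :
    ∑ v ∈ A, netOut f v = cutCap c A := by
  rw [sum_netOut_eq_sum_sum_compl]
  refine sum_congr rfl fun u hu => sum_congr rfl fun v hv => ?_
  obtain ⟨hfuv, hfvu⟩ := hsat u hu v (mem_compl.1 hv)
  rw [hfuv, hfvu, sub_zero]

lemma cutCap_nonneg {c : V → V → ℝ} (hc : ∀ u v, 0 ≤ c u v) (A : Finset V) :
    0 ≤ cutCap c A :=
  sum_nonneg fun u _ => sum_nonneg fun v _ => hc u v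

lemma le_minCut_iff {c : V → V → ℝ} (hc : ∀ u v, 0 ≤ c u v) {S T : Finset V}
    (hST : Disjoint S T) {y : ℝ} :
    y ≤ minCut c S T ↔ ∀ A : Finset V, S ⊆ A → Disjoint T A → y ≤ cutCap c A := by
  rw [minCut, le_csInf_iff]
  · simp only [Set.mem_ofPred_eq, forall_exists_index, and_imp]
    exact ⟨fun h A hSA hTA => h _ A hSA hTA rfl, fun h _ A hSA hTA hy => hy ▸ h A hSA hTA⟩
  · refine ⟨0, ?_⟩
    rintro _ ⟨A, -, -, rfl⟩
    exact cutCap_nonneg hc A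
  · exact ⟨_, Tᶜ, subset_compl_iff_disjoint_right.2 hST, disjoint_compl_right, rfl⟩

/-- Reachability of `v` from `s` in the residual network of `f`, encoded without paths: some
feasible `g` moves a positive amount of net outflow from `v` to `s`. -/
def Augmentable (c f : V → V → ℝ) (s v : V) : Prop :=
  ∃ g, Feasible c g ∧
    ∃ ε : ℝ, 0 < ε ∧ netOut g = netOut f + ε • (Pi.single s 1 - Pi.single v 1)

lemma augmentable_self {c f : V → V → ℝ} (hf : Feasible c f) (s : V) : Augmentable c f s s :=
  ⟨f, hf, 1, one_pos, by simp⟩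

/- To push `g` further along the residual edge `(v, u)`, first mix it with `f`: close to `f`,
that edge still has residual capacity. -/
lemma Augmentable.of_lt {c f : V → V → ℝ} {s v u : V} (hf : Feasible c f)
    (hv : Augmentable c f s v) (hvu : f v u < c v u) : Augmentable c f s u := by
  obtain ⟨g, hg, ε, hε, hgε⟩ := hv
  obtain ⟨t, ht, ht1, htc⟩ := exists_pos_le_one_add_mul_sub_le (b := g v u + ε) hvu
  refine ⟨f + t • (g - f + ε • unitFlow v u), fun a b => ?_, t * ε,
    mul_pos ht hε, ?_⟩
  · by_cases hab : a = v ∧ b = u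
    · obtain ⟨rfl, rfl⟩ := hab
      simp only [Pi.add_apply, Pi.smul_apply, Pi.sub_apply, unitFlow_apply, and_self, if_true,
        smul_eq_mul, mul_one]
      constructor <;> nlinarith [hf a b, hg a b]
    · have hzero : unitFlow v u a b = 0 := by rw [unitFlow_apply, if_neg hab]
      simp only [Pi.add_apply, Pi.smul_apply, Pi.sub_apply, hzero, smul_eq_mul, mul_zero,
        add_zero]
      constructor <;> nlinarith [hf a b, hg a b]
  · rw [netOut_add, netOut_smul, netOut_add, netOut_sub, netOut_smul, netOut_unitFlow, hgε]
    module

lemma Augmentable.of_pos {c f : V → V → ℝ} {s v u : V} (hf : Feasible c f)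
    (hv : Augmentable c f s v) (huv : 0 < f u v) : Augmentable c f s u := by
  obtain ⟨g, hg, ε, hε, hgε⟩ := hv
  obtain ⟨t, ht, ht1, htc⟩ :=
    exists_pos_le_one_add_mul_sub_le (a := -f u v) (b := -(g u v - ε)) (c := 0) (by linarith)
  refine ⟨f + t • (g - f - ε • unitFlow u v), fun a b => ?_, t * ε,
    mul_pos ht hε, ?_⟩
  · by_cases hab : a = u ∧ b = v
    · obtain ⟨rfl, rfl⟩ := hab
      simp only [Pi.add_apply, Pi.smul_apply, Pi.sub_apply, unitFlow_apply, and_self, if_true,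
        smul_eq_mul, mul_one]
      constructor <;> nlinarith [hf a b, hg a b]
    · have hzero : unitFlow u v a b = 0 := by rw [unitFlow_apply, if_neg hab]
      simp only [Pi.add_apply, Pi.smul_apply, Pi.sub_apply, hzero, smul_eq_mul, mul_zero,
        sub_zero]
      constructor <;> nlinarith [hf a b, hg a b]
  · rw [netOut_add, netOut_smul, netOut_sub, netOut_sub, netOut_smul, netOut_unitFlow, hgε]
    module

lemma not_augmentable_of_isMaxOn {c f : V → V → ℝ} {s t : V} (hst : s ≠ t)
    (hmax : IsMaxOn (fun g => netOut g s) {g | IsFlow c s t g} f) (hf : IsFlow c s t f) :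
    ¬ Augmentable c f s t := by
  rintro ⟨g, hg, ε, hε, hgε⟩
  have hnet (w : V) :
      netOut g w = netOut f w + ε * ((if w = s then 1 else 0) - if w = t then 1 else 0) := by
    simp [hgε, Pi.single_apply]
  have hgflow : IsFlow c s t g :=
    ⟨hg, fun w hws hwt => by rw [hnet, hf.2 w hws hwt]; simp [hws, hwt]⟩
  have hle := hmax hgflow
  simp [hnet, hst] at hle
  linarith

theorem exists_isFlow_netOut_eq_cutCap {c : V → V → ℝ} (hc : ∀ u v, 0 ≤ c u v) {s t : V}
    (hst : s ≠ t) :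
    ∃ f, IsFlow c s t f ∧
      ∃ A : Finset V, s ∈ A ∧ t ∉ A ∧ netOut f s = cutCap c A := by
  classical
  obtain ⟨f, hf, hmax⟩ := exists_isMaxOn_netOut hc s t
  set A := univ.filter (Augmentable c f s)
  have hmem (v : V) : v ∈ A ↔ Augmentable c f s v := by simp [A]
  have htA : t ∉ A := (hmem t).not.2 (not_augmentable_of_isMaxOn hst hmax hf)
  have hsA : s ∈ A := (hmem s).2 (augmentable_self hf.1 s)
  refine ⟨f, hf, A, hsA, htA, ?_⟩
  rw [← sum_netOut_eq_cutCap, sum_eq_single_of_mem s hsA fun w hw hws => hf.2 w hws ?_]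
  · rintro rfl
    exact htA hw
  · intro u hu v hv
    rw [hmem] at hu hv
    exact ⟨le_antisymm (hf.1 u v).2 (not_lt.1 fun h => hv (hu.of_lt hf.1 h)),
      le_antisymm (not_lt.1 fun h => hv (hu.of_pos hf.1 h)) (hf.1 v u).1⟩

end Flows

section SuperSink

variable {V : Type}

def withSink (c : V → V → ℝ) (d : V → ℝ) : Option V → Option V → ℝ
  | some u, some v => c u v
  | some u, none => d u
  | none, _ => 0

lemma Feasible.apply_none_eq_zero {c : V → V → ℝ} {d : V → ℝ}
    {g : Option V → Option V → ℝ}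
    (hg : Feasible (withSink c d) g) (a : Option V) : g none a = 0 :=
  le_antisymm ((hg none a).2.trans_eq (by cases a <;> rfl)) (hg none a).1

variable [Fintype V]

lemma netOut_some (g : Option V → Option V → ℝ) (v : V) :
    netOut g (some v) =
      netOut (fun a b => g (some a) (some b)) v + g (some v) none - g none (some v) := by
  simp only [netOut, Fintype.sum_option]
  ring

lemma IsFlow.netOut_some_eq_sum {c : V → V → ℝ} {d : V → ℝ}
    {g : Option V → Option V → ℝ} {s : V} (hg : IsFlow (withSink c d) (some s) none g) :
    netOut g (some s) = ∑ u, g (some u) none := by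
  rw [hg.netOut_source (Option.some_ne_none s)]
  simp [netOut, Fintype.sum_option, hg.1.apply_none_eq_zero]

variable [DecidableEq V]

lemma cutCap_withSink (c : V → V → ℝ) (d : V → ℝ) {A : Finset (Option V)}
    (hA : none ∉ A) :
    cutCap (withSink c d) A = cutCap c (eraseNone A) + ∑ u ∈ eraseNone A, d u := by
  have hA' : A = (eraseNone A).map Function.Embedding.some := by
    rw [map_some_eraseNone, erase_eq_of_notMem hA]
  set B := eraseNone A
  rw [hA', cutCap, cutCap, sum_map, ← sum_add_distrib]
  refine sum_congr rfl fun u _ => ?_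
  have hall := sum_compl_add_sum (B.map .some) (withSink c d (some u))
  have hV := sum_compl_add_sum B (c u)
  rw [Fintype.sum_option, sum_map] at hall
  simp only [withSink, Function.Embedding.some_apply] at hall ⊢
  linarith

lemma sum_le_cutCap_withSink {c : V → V → ℝ} {s : V} {b d : V → ℝ}
    (hd : ∀ v, v ≠ s → d v = -b v)
    (hcut : ∀ A : Finset V, s ∈ A → ∑ v ∈ Aᶜ, -b v ≤ cutCap c A)
    {A : Finset (Option V)} (hs : some s ∈ A) (hA : none ∉ A) :
    ∑ v, d v ≤ cutCap (withSink c d) A := by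
  have hsA : s ∈ eraseNone A := mem_eraseNone.2 hs
  calc ∑ v, d v = ∑ v ∈ (eraseNone A)ᶜ, -b v + ∑ v ∈ eraseNone A, d v := by
        rw [← sum_compl_add_sum (eraseNone A)]
        congr 1
        refine sum_congr rfl fun v hv => hd v ?_
        rintro rfl
        exact mem_compl.1 hv hsA
    _ ≤ cutCap c (eraseNone A) + ∑ v ∈ eraseNone A, d v := by gcongr; exact hcut _ hsA
    _ = cutCap (withSink c d) A := (cutCap_withSink c d hA).symm

theorem exists_feasible_netOut_eq {c : V → V → ℝ} (hc : ∀ u v, 0 ≤ c u v) {s : V}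
    {b : V → ℝ} (hb : ∀ v, v ≠ s → b v ≤ 0) (hsum : ∑ v, b v = 0)
    (hcut : ∀ A : Finset V, s ∈ A → ∑ v ∈ Aᶜ, -b v ≤ cutCap c A) :
    ∃ f, Feasible c f ∧ netOut f = b := by
  set d : V → ℝ := fun v => if v = s then 0 else -b v
  have hd (v : V) : 0 ≤ d v := by
    by_cases hv : v = s
    · simp [d, hv]
    · simpa [d, hv] using hb v hv
  have hds : ∑ v, d v = b s := by
    have hrest : ∑ v ∈ univ.erase s, d v = -∑ v ∈ univ.erase s, b v := by
      rw [← sum_neg_distrib]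
      exact sum_congr rfl fun v hv => if_neg (ne_of_mem_erase hv)
    rw [← add_sum_erase _ _ (mem_univ s)] at hsum ⊢
    rw [hrest, show d s = 0 from if_pos rfl]
    linarith
  have hc' (a a' : Option V) : 0 ≤ withSink c d a a' := by
    rcases a with _ | u <;> rcases a' with _ | v
    exacts [le_rfl, le_rfl, hd u, hc u v]
  obtain ⟨g, hg, A', hsA', hA', hval⟩ :=
    exists_isFlow_netOut_eq_cutCap hc' (Option.some_ne_none s)
  have hge : ∑ v, d v ≤ netOut g (some s) :=
    hval ▸ sum_le_cutCap_withSink (fun v hv => if_neg hv) hcut hsA' hA'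
  have hsat (u : V) : g (some u) none = d u := by
    have hle : ∀ u ∈ univ, g (some u) none ≤ d u := fun u _ => (hg.1 _ _).2
    exact (sum_eq_sum_iff_of_le hle).1
      (le_antisymm (sum_le_sum hle) (hg.netOut_some_eq_sum ▸ hge)) u (mem_univ u)
  have hflow : netOut g (some s) = ∑ v, d v := by
    rw [hg.netOut_some_eq_sum]
    exact sum_congr rfl fun u _ => hsat u
  refine ⟨fun u v => g (some u) (some v), fun u v => hg.1 (some u) (some v), funext fun v => ?_⟩
  have hv := netOut_some g v
  rw [hsat, hg.1.apply_none_eq_zero] at hv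
  by_cases hvs : v = s
  · subst hvs
    have : d v = 0 := if_pos rfl
    linarith [hflow, hds]
  · have : d v = -b v := if_neg hvs
    linarith [hg.2 (some v) (by simpa using hvs) (Option.some_ne_none v)]

theorem exists_feasible_netOut_eq_iff {c : V → V → ℝ} (hc : ∀ u v, 0 ≤ c u v) {s : V}
    {b : V → ℝ} (hb : ∀ v, v ≠ s → b v ≤ 0) :
    (∃ f, Feasible c f ∧ netOut f = b) ↔
      ∑ v, b v = 0 ∧ ∀ A : Finset V, s ∈ A → ∑ v ∈ Aᶜ, -b v ≤ cutCap c A := by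
  refine ⟨?_, fun ⟨hsum, hcut⟩ => exists_feasible_netOut_eq hc hb hsum hcut⟩
  rintro ⟨f, hf, rfl⟩
  refine ⟨sum_netOut_univ f, fun A _ => ?_⟩
  have h := sum_compl_add_sum A (netOut f)
  rw [sum_netOut_univ] at h
  rw [sum_neg_distrib]
  linarith [hf.sum_netOut_le_cutCap A]

end SuperSink

lemma isExtFlow_iff {V : Type} [Fintype V] {k : ℕ} {q : Fin k → V} (hq : Function.Injective q)
    {c f : V → V → ℝ} {x : Fin k → ℝ} :
    IsExtFlow c f q x ↔ Feasible c f ∧ netOut f = Function.extend q x 0 := by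
  refine and_congr_right fun _ => ⟨fun ⟨hout, hterm⟩ => funext fun v => ?_,
    fun h => ⟨fun v hv => ?_, fun i => ?_⟩⟩
  · by_cases hv : ∃ i, q i = v
    · obtain ⟨i, rfl⟩ := hv
      rw [hq.extend_apply, hterm]
    · rw [Function.extend_apply' _ _ _ hv, hout v (not_exists.1 hv)]
      rfl
  · rw [h, Function.extend_apply' _ _ _ (not_exists.2 hv)]
    rfl
  · rw [h, hq.extend_apply]

section Terminals

variable {V ι : Type} {q : ι → V}

lemma sum_extend_eq_sum_preimage (hq : Function.Injective q) (x : ι → ℝ) (A : Finset V) :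
    ∑ v ∈ A, Function.extend q x 0 v = ∑ i ∈ A.preimage q hq.injOn, x i := by
  rw [← sum_preimage q A hq.injOn _ fun v _ hv => Function.extend_apply' x (0 : V → ℝ) v hv]
  simp only [hq.extend_apply]

variable [Fintype V] [DecidableEq V]

lemma forall_le_minCut_iff {c : V → V → ℝ} (hc : ∀ u v, 0 ≤ c u v)
    (hq : Function.Injective q) {x : ι → ℝ} {i₀ : ι}
    (hx : ∀ i, i ≠ i₀ → x i ≤ 0) :
    (∀ S : Finset ι, S.Nonempty → i₀ ∉ S →
        ∑ i ∈ S, -x i ≤ minCut c {q i₀} (S.image q)) ↔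
      ∀ A : Finset V, q i₀ ∈ A →
        ∑ v ∈ Aᶜ, -Function.extend q x 0 v ≤ cutCap c A := by
  have hsum (A : Finset V) : ∑ v ∈ Aᶜ, -Function.extend q x 0 v =
      ∑ i ∈ Aᶜ.preimage q hq.injOn, -x i := by
    rw [sum_neg_distrib, sum_neg_distrib, sum_extend_eq_sum_preimage hq]
  have hdisj {S : Finset ι} (hS : i₀ ∉ S) : Disjoint {q i₀} (S.image q) := by
    simpa [hq.eq_iff] using hS
  constructor
  · intro h A hA
    rw [hsum]
    rcases (Aᶜ.preimage q hq.injOn).eq_empty_or_nonempty with hS | hS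
    · rw [hS, sum_empty]
      exact cutCap_nonneg hc A
    · have hi₀ : i₀ ∉ Aᶜ.preimage q hq.injOn := by simpa using hA
      refine (le_minCut_iff hc (hdisj hi₀)).1 (h _ hS hi₀) A (singleton_subset_iff.2 hA) ?_
      simp [disjoint_left]
  · intro h S _ hS
    rw [le_minCut_iff hc (hdisj hS)]
    intro A hA hSA
    have hq₀ : q i₀ ∈ A := hA (mem_singleton_self _)
    calc ∑ i ∈ S, -x i ≤ ∑ i ∈ Aᶜ.preimage q hq.injOn, -x i := by
          refine sum_le_sum_of_subset_of_nonneg (fun i hi => ?_) fun i hi _ => ?_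
          · simpa using disjoint_left.1 hSA (mem_image_of_mem q hi)
          · have hi : q i ∉ A := by simpa using hi
            exact neg_nonneg.2 (hx i fun h => hi (h ▸ hq₀))
      _ = ∑ v ∈ Aᶜ, -Function.extend q x 0 v := (hsum A).symm
      _ ≤ cutCap c A := h A hq₀

end Terminals

theorem stmt4 {V : Type} [Fintype V] [DecidableEq V] {k : ℕ} (c : V → V → ℝ)
    (hc : ∀ u v, 0 ≤ c u v) (q : Fin (k + 1) → V) (hq : Function.Injective q)
    (x : Fin (k + 1) → ℝ) (hx : ∀ i, i ≠ 0 → x i ≤ 0) :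
    (∃ f, IsExtFlow c f q x) ↔
      ((∑ i, x i) = 0 ∧
        ∀ S : Finset (Fin (k + 1)), S.Nonempty → (0 : Fin (k + 1)) ∉ S →
          ∑ i ∈ S, (-x i) ≤ minCut c {q 0} (S.image q)) := by
  have hb (v : V) (hv : v ≠ q 0) : Function.extend q x 0 v ≤ 0 := by
    by_cases h : ∃ i, q i = v
    · obtain ⟨i, rfl⟩ := h
      rw [hq.extend_apply]
      exact hx i fun h0 => hv (h0 ▸ rfl)
    · rw [Function.extend_apply' _ _ _ h]
      rfl
  have hsum : ∑ i, x i = ∑ v, Function.extend q x 0 v := by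
    rw [sum_extend_eq_sum_preimage hq]
    simp
  simp only [isExtFlow_iff hq, hsum, forall_le_minCut_iff hc hq hx]
  exact exists_feasible_netOut_eq_iff hc hb
end
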